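/- For the exponential family presentation of the gamma distributions with natural parameters (ν, κ), the Fisher information metric in the κ-coordinate direction equals ψ′(κ) − 1/κ, where ψ′ is the trigamma function; moreover ψ′(κ) − 1/κ > 0 for all κ > 0, so the integrand in the geodesic arclength formula √(ψ′(κ) − 1/κ) is well defined. -/

import Mathlib

/-!
By the functional equation `log Γ(x + 1) = log Γ(x) + log x`, the function `g(x) = ψ'(x) - 1/x`
satisfies `g(x) - g(x + 1) = 1 / (x² (x + 1)) > 0`. Log-convexity of `Γ` gives `ψ' ≥ 0`, so
`g(x) ≥ g(x + n) ≥ -1/(x + n) → 0`; hence `g ≥ 0`, and one more step of the recursion makes it strict.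
-/

open Real Filter Set Topology
open scoped ContDiff

namespace Real

theorem analyticAt_Gamma {x : ℝ} (hx : 0 < x) : AnalyticAt ℝ Gamma x := by
  have hU : IsOpen {s : ℂ | 0 < s.re} := isOpen_lt continuous_const Complex.continuous_re
  have hdiff : DifferentiableOn ℂ Complex.Gamma {s : ℂ | 0 < s.re} := fun s hs =>
    (Complex.differentiableAt_Gamma s fun m hm => by
      simp only [mem_ofPred_eq, hm, Complex.neg_re, Complex.natCast_re] at hs
      linarith [m.cast_nonneg (α := ℝ)]).differentiableWithinAt
  have hC : ContDiffAt ℂ ω Complex.Gamma (x : ℂ) :=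
    (hdiff.analyticAt (hU.mem_nhds (by simpa using hx))).contDiffAt
  simpa [Complex.Gamma_ofReal] using hC.real_of_complex.analyticAt

theorem log_Gamma_add_one {x : ℝ} (hx : 0 < x) :
    log (Gamma (x + 1)) = log (Gamma x) + log x := by
  rw [Gamma_add_one hx.ne', log_mul hx.ne' (Gamma_pos_of_pos hx).ne', add_comm]

noncomputable def digamma : ℝ → ℝ := deriv fun x => log (Gamma x)

noncomputable def trigamma : ℝ → ℝ := deriv digamma

theorem analyticAt_log_Gamma {x : ℝ} (hx : 0 < x) : AnalyticAt ℝ (fun y => log (Gamma y)) x :=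
  (analyticAt_Gamma hx).log (Gamma_pos_of_pos hx)

theorem analyticAt_digamma {x : ℝ} (hx : 0 < x) : AnalyticAt ℝ digamma x :=
  (analyticAt_log_Gamma hx).deriv

theorem digamma_add_one {x : ℝ} (hx : 0 < x) : digamma (x + 1) = digamma x + x⁻¹ := by
  have hfe : (fun y => log (Gamma (y + 1))) =ᶠ[𝓝 x] fun y => log (Gamma y) + log y :=
    eventually_gt_nhds hx |>.mono fun y hy => log_Gamma_add_one hy
  have := hfe.deriv_eq
  rwa [deriv_comp_add_const (f := fun y => log (Gamma y)), deriv_fun_add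
    (analyticAt_log_Gamma hx).differentiableAt (differentiableAt_log hx.ne'), deriv_log] at this

theorem trigamma_add_one {x : ℝ} (hx : 0 < x) : trigamma (x + 1) = trigamma x - (x ^ 2)⁻¹ := by
  have hfe : (fun y => digamma (y + 1)) =ᶠ[𝓝 x] fun y => digamma y + y⁻¹ :=
    eventually_gt_nhds hx |>.mono fun y hy => digamma_add_one hy
  have := hfe.deriv_eq
  rwa [deriv_comp_add_const, deriv_fun_add (analyticAt_digamma hx).differentiableAt
    (differentiableAt_inv hx.ne'), deriv_inv, ← sub_eq_add_neg] at this

theorem trigamma_nonneg {x : ℝ} (hx : 0 < x) : 0 ≤ trigamma x := by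
  have hmono : MonotoneOn digamma (Ioi 0) :=
    convexOn_log_Gamma.monotoneOn_deriv fun y hy => (analyticAt_log_Gamma hy).differentiableAt
  rw [trigamma, ← derivWithin_of_isOpen isOpen_Ioi hx]
  exact hmono.derivWithin_nonneg

theorem inv_le_trigamma {x : ℝ} (hx : 0 < x) : x⁻¹ ≤ trigamma x := by
  have hstep : ∀ y, 0 < y → trigamma (y + 1) - (y + 1)⁻¹ ≤ trigamma y - y⁻¹ := by
    intro y hy
    have : y⁻¹ - (y + 1)⁻¹ ≤ (y ^ 2)⁻¹ := by
      rw [inv_sub_inv hy.ne' (by positivity), add_sub_cancel_left, ← one_div, pow_two]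
      gcongr
      linarith
    linarith [trigamma_add_one hy]
  have hshift : ∀ n : ℕ, trigamma (x + n) - (x + n)⁻¹ ≤ trigamma x - x⁻¹ := by
    intro n
    induction n with
    | zero => simp
    | succ n ih =>
      push_cast
      rw [← add_assoc]
      exact (hstep _ (by positivity)).trans ih
  have hlim : Tendsto (fun n : ℕ => -(x + n)⁻¹) atTop (𝓝 0) := by
    simpa using (tendsto_inv_atTop_zero.comp (tendsto_atTop_add_const_left _ x
      tendsto_natCast_atTop_atTop)).neg
  have hlower : ∀ n : ℕ, -(x + n)⁻¹ ≤ trigamma x - x⁻¹ := fun n => by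
    linarith [hshift n, trigamma_nonneg (x := x + n) (by positivity)]
  linarith [le_of_tendsto' hlim hlower]

theorem iteratedDeriv_two_log_Gamma : iteratedDeriv 2 (fun x => log (Gamma x)) = trigamma := by
  rw [iteratedDeriv_eq_iterate]
  rfl

end Real

theorem trigamma_gt_inv (κ : ℝ) (hκ : 0 < κ) :
    iteratedDeriv 2 (fun x : ℝ => Real.log (Real.Gamma x)) κ > 1 / κ := by
  have hκ1 : 0 < κ + 1 := by linarith
  have hinv : κ⁻¹ < (κ + 1)⁻¹ + (κ ^ 2)⁻¹ := by
    rw [inv_eq_one_div, inv_eq_one_div, inv_eq_one_div, div_add_div _ _ hκ1.ne' (by positivity),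
      div_lt_div_iff₀ hκ (by positivity)]
    nlinarith
  calc 1 / κ = κ⁻¹ := one_div κ
    _ < (κ + 1)⁻¹ + (κ ^ 2)⁻¹ := hinv
    _ ≤ trigamma (κ + 1) + (κ ^ 2)⁻¹ := by gcongr; exact inv_le_trigamma hκ1
    _ = iteratedDeriv 2 (fun x : ℝ => Real.log (Real.Gamma x)) κ := by
      rw [Real.iteratedDeriv_two_log_Gamma, trigamma_add_one hκ, sub_add_cancel]
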